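/- Let A, B be integers and p an odd prime such that B is a quadratic residue mod p, with b^2 ≡ B (mod p). Let u_n(A,B) be the Lucas sequence with u_0=0, u_1=1, u_{n+1}=A u_n - B u_{n-1}. If A^2 - 4B is a quadratic residue mod p then u_{(p+1)/2}(A,B) ≡ (A-2b | p) (mod p), and if A^2 - 4B is a quadratic nonresidue mod p then u_{(p+1)/2}(A,B) ≡ 0 (mod p). -/
import Mathlib


/-- The Lucas sequence u_n(A, B). -/
def lucasU (A B : ℤ) : ℕ → ℤ
  | 0 => 0
  | 1 => 1
  | n + 2 => A * lucasU A B (n + 1) - B * lucasU A B n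

lemma lucasU_closed (A B : ℤ) {R : Type*} [CommRing R] (α β : R)
    (h1 : α + β = (A : R)) (h2 : α * β = (B : R)) :
    ∀ n, (lucasU A B n : R) * (α - β) = α ^ n - β ^ n := by
  intro n
  induction n using Nat.strong_induction_on with
  | _ n ih =>
    rcases n with _ | _ | n
    · simp [lucasU]
    · simp [lucasU]
    · have e0 := ih n (by omega)
      have e1 := ih (n+1) (by omega)
      simp only [lucasU]
      push_cast
      linear_combination (A : R) * e1 - (B : R) * e0
        - (α ^ (n+1) - β ^ (n+1)) * h1 + (α ^ n - β ^ n) * h2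

theorem lucasU_half_p_add_one (A B b : ℤ) (p : ℕ) [Fact p.Prime] (hp : p ≠ 2)
    (hb : ¬ (p : ℤ) ∣ b) (hB : b ^ 2 ≡ B [ZMOD p]) (hD : ¬ (p : ℤ) ∣ (A ^ 2 - 4 * B)) :
    (legendreSym p (A ^ 2 - 4 * B) = 1 →
      (((lucasU A B ((p + 1) / 2) : ℤ) : ZMod p) =
        ((legendreSym p (A - 2 * b) : ℤ) : ZMod p))) ∧
    (legendreSym p (A ^ 2 - 4 * B) = -1 →
      ((lucasU A B ((p + 1) / 2) : ZMod p) = 0)) := by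
  have hpp : p.Prime := Fact.out
  obtain ⟨k, hk⟩ := hpp.odd_of_ne_two hp
  set K := GaloisField p 2 with hK
  letI : Fintype K := Fintype.ofFinite K
  have hcard : Fintype.card K = p ^ 2 := by
    rw [← Nat.card_eq_fintype_card]; exact GaloisField.card p 2 (by norm_num)
  have hchar : ringChar K ≠ 2 := by
    rw [ringChar.eq K p]; exact hp
  set f : ZMod p →+* K := algebraMap (ZMod p) K with hfdef
  have hf : Function.Injective f := f.injective
  -- basic nonvanishing facts in ZMod p
  have hbz : ((b : ℤ) : ZMod p) ≠ 0 := by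
    rwa [Ne, ZMod.intCast_zmod_eq_zero_iff_dvd]
  have hBz : ((B : ℤ) : ZMod p) = ((b : ℤ) : ZMod p) ^ 2 := by
    have := (ZMod.intCast_eq_intCast_iff _ _ _).mpr hB
    push_cast at this ⊢
    rw [← this]
  have hBne : ((B : ℤ) : ZMod p) ≠ 0 := by
    rw [hBz]; exact pow_ne_zero 2 hbz
  have hDz : ((A ^ 2 - 4 * B : ℤ) : ZMod p) ≠ 0 := by
    rwa [Ne, ZMod.intCast_zmod_eq_zero_iff_dvd]
  have hd0 : ((A ^ 2 - 4 * B : ℤ) : K) ≠ 0 := by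
    rw [← map_intCast f]
    intro h
    exact hDz (hf (by rw [h, map_zero]))
  -- square root of the discriminant in K
  have hsq : IsSquare ((A ^ 2 - 4 * B : ℤ) : K) := by
    rw [FiniteField.isSquare_iff hchar hd0, hcard]
    have he : p ^ 2 = 2 * ((p - 1) * (k + 1)) + 1 := by
      subst hk
      have h1 : 2 * k + 1 - 1 = 2 * k := by omega
      rw [h1]; ring
    have he2 : p ^ 2 / 2 = (p - 1) * (k + 1) := by omega
    rw [he2, pow_mul, ← map_intCast f, ← map_pow,
      ZMod.pow_card_sub_one_eq_one hDz, map_one, one_pow]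
  obtain ⟨s, hs⟩ := hsq
  have hs0 : s ≠ 0 := by rintro rfl; rw [mul_zero] at hs; exact hd0 hs
  have h2K : (2 : K) ≠ 0 := by
    intro h
    have h2 : (p : ℕ) ∣ 2 := (CharP.cast_eq_zero_iff K p 2).mp (by exact_mod_cast h)
    exact hp ((Nat.prime_dvd_prime_iff_eq hpp Nat.prime_two).mp h2)
  set c : K := (2 : K)⁻¹ with hcdef
  have hc : (2 : K) * c = 1 := mul_inv_cancel₀ h2K
  set α : K := (((A : ℤ) : K) + s) * c with hαdef
  set β : K := (((A : ℤ) : K) - s) * c with hβdef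
  have h1' : α + β = ((A : ℤ) : K) := by
    rw [hαdef, hβdef]; linear_combination ((A : ℤ) : K) * hc
  have hsK : ((A : ℤ) : K) ^ 2 - 4 * ((B : ℤ) : K) = s * s := by
    push_cast at hs; linear_combination hs
  have h2' : α * β = ((B : ℤ) : K) := by
    rw [hαdef, hβdef]
    linear_combination c ^ 2 * hsK + ((B : ℤ) : K) * (2 * c + 1) * hc
  have hαβ : α - β = s := by
    rw [hαdef, hβdef]; linear_combination s * hc
  have closed := lucasU_closed A B α β h1' h2'
  have hfrob : ∀ x : ℤ, ((x : ℤ) : K) ^ p = ((x : ℤ) : K) := by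
    intro x
    rw [← map_intCast f x, ← map_pow, ZMod.pow_card]
  have hkp : p / 2 = k := by omega
  have hm : (p + 1) / 2 = k + 1 := by omega
  have h2k : 2 * k = p - 1 := by omega
  -- legendre symbol of an integer x, as a power, in K
  have hleg : ∀ x : ℤ, ((legendreSym p x : ℤ) : K) = ((x : ℤ) : K) ^ k := by
    intro x
    rw [← map_intCast f, ← map_intCast f x, ← map_pow]
    congr 1
    rw [legendreSym.eq_pow, hkp]
  have hsp : s ^ p = s * ((legendreSym p (A ^ 2 - 4 * B) : ℤ) : K) := by
    have h1 : s ^ p = s * (s * s) ^ k := by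
      have hpe : s ^ p = s ^ (2 * k + 1) := by rw [← hk]
      rw [hpe, pow_succ, mul_comm 2 k, pow_mul]; ring
    rw [h1, ← hs, hleg]
  have hcp : c ^ p = c := by
    rw [hcdef, inv_pow]
    congr 1
    have := hfrob 2; push_cast at this; rw [this]
  have hBk : ((B : ℤ) : K) ^ k = 1 := by
    rw [← map_intCast f, ← map_pow]
    have hZ : ((B : ℤ) : ZMod p) ^ k = 1 := by
      rw [hBz, ← pow_mul, h2k, ZMod.pow_card_sub_one_eq_one hbz]
    rw [hZ, map_one]
  have hBK0 : ((B : ℤ) : K) ≠ 0 := by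
    rw [← map_intCast f]
    intro h; exact hBne (hf (by rw [h, map_zero]))
  have hα0 : α ≠ 0 := by
    intro h; rw [h, zero_mul] at h2'; exact hBK0 h2'.symm
  have hβ0 : β ≠ 0 := by
    intro h; rw [h, mul_zero] at h2'; exact hBK0 h2'.symm
  have hbK0 : ((b : ℤ) : K) ≠ 0 := by
    rw [← map_intCast f]
    intro h; exact hbz (hf (by rw [h, map_zero]))
  have hbBK : ((b : ℤ) : K) ^ 2 = ((B : ℤ) : K) := by
    rw [← map_intCast f, ← map_intCast f B, ← map_pow]
    exact congrArg f hBz.symm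
  have hαroot : α ^ 2 = ((A : ℤ) : K) * α - ((B : ℤ) : K) := by
    linear_combination α * h1' - h2'
  have hβroot : β ^ 2 = ((A : ℤ) : K) * β - ((B : ℤ) : K) := by
    linear_combination β * h1' - h2'
  constructor
  · intro hl
    have hsp1 : s ^ p = s := by rw [hsp, hl]; push_cast; ring
    have hαp : α ^ p = α := by
      rw [hαdef, mul_pow, add_pow_char, hfrob A, hsp1, hcp]
    have hβp : β ^ p = β := by
      rw [hβdef, mul_pow, sub_pow_char, hfrob A, hsp1, hcp]
    have hε2 : (α ^ k) ^ 2 = 1 := by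
      refine mul_right_cancel₀ hα0 ?_
      rw [one_mul]
      calc (α ^ k) ^ 2 * α = α ^ (2 * k + 1) := by ring
        _ = α ^ p := by rw [← hk]
        _ = α := hαp
    have hεδ : α ^ k * β ^ k = 1 := by rw [← mul_pow, h2', hBk]
    have hδε : β ^ k = α ^ k := by
      calc β ^ k = (α ^ k) ^ 2 * β ^ k := by rw [hε2, one_mul]
        _ = α ^ k * (α ^ k * β ^ k) := by ring
        _ = α ^ k := by rw [hεδ, mul_one]
    have hαb : (α - ((b : ℤ) : K)) ^ 2 = (((A : ℤ) : K) - 2 * ((b : ℤ) : K)) * α := by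
      linear_combination hαroot + hbBK
    have hβb : (β - ((b : ℤ) : K)) ^ 2 = (((A : ℤ) : K) - 2 * ((b : ℤ) : K)) * β := by
      linear_combination hβroot + hbBK
    have hA2bz : ((A - 2 * b : ℤ) : ZMod p) ≠ 0 := by
      intro h
      have hK0 : ((A : ℤ) : K) - 2 * ((b : ℤ) : K) = 0 := by
        have h' : ((A - 2 * b : ℤ) : K) = 0 := by rw [← map_intCast f, h, map_zero]
        push_cast at h'; linear_combination h'
      have hα : α = ((b : ℤ) : K) := by
        have h1 := hαb
        rw [hK0, zero_mul] at h1
        exact sub_eq_zero.mp (pow_eq_zero_iff (two_ne_zero) |>.mp h1)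
      have hβ : β = ((b : ℤ) : K) := by
        have h1 := hβb
        rw [hK0, zero_mul] at h1
        exact sub_eq_zero.mp (pow_eq_zero_iff (two_ne_zero) |>.mp h1)
      rw [hα, hβ, sub_self] at hαβ
      exact hs0 hαβ.symm
    have habne : α - ((b : ℤ) : K) ≠ 0 := by
      intro h
      have hα : α = ((b : ℤ) : K) := sub_eq_zero.mp h
      have hβ : β = ((b : ℤ) : K) := by
        have h2'' := h2'
        rw [hα, ← hbBK, pow_two] at h2''
        exact mul_left_cancel₀ hbK0 h2''
      rw [hα, hβ, sub_self] at hαβ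
      exact hs0 hαβ.symm
    have habp : (α - ((b : ℤ) : K)) ^ p = α - ((b : ℤ) : K) := by
      rw [sub_pow_char, hαp, hfrob b]
    have hab1 : (α - ((b : ℤ) : K)) ^ (2 * k) = 1 := by
      refine mul_right_cancel₀ habne ?_
      rw [one_mul, ← pow_succ]
      calc (α - ((b : ℤ) : K)) ^ (2 * k + 1) = (α - ((b : ℤ) : K)) ^ p := by rw [← hk]
        _ = _ := habp
    have hχε : ((legendreSym p (A - 2 * b) : ℤ) : K) * α ^ k = 1 := by
      rw [hleg, ← mul_pow]
      have hcast : ((A - 2 * b : ℤ) : K) = ((A : ℤ) : K) - 2 * ((b : ℤ) : K) := by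
        push_cast; ring
      rw [hcast, ← hαb, ← pow_mul]
      exact hab1
    have hχ2 : ((legendreSym p (A - 2 * b) : ℤ) : K) ^ 2 = 1 := by
      have := legendreSym.sq_one (p := p) hA2bz
      rw [← Int.cast_pow, this, Int.cast_one]
    have hεχ : α ^ k = ((legendreSym p (A - 2 * b) : ℤ) : K) := by
      calc α ^ k = ((legendreSym p (A - 2 * b) : ℤ) : K) ^ 2 * α ^ k := by
            rw [hχ2, one_mul]
        _ = ((legendreSym p (A - 2 * b) : ℤ) : K) *
            (((legendreSym p (A - 2 * b) : ℤ) : K) * α ^ k) := by ring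
        _ = _ := by rw [hχε, mul_one]
    have hu : ((lucasU A B (k + 1) : ℤ) : K) = α ^ k := by
      refine mul_right_cancel₀ hs0 ?_
      have hcl := closed (k + 1)
      rw [hαβ] at hcl
      rw [hcl]
      calc α ^ (k + 1) - β ^ (k + 1) = α ^ k * α - β ^ k * β := by
            rw [pow_succ, pow_succ]
        _ = α ^ k * α - α ^ k * β := by rw [hδε]
        _ = α ^ k * s := by rw [← hαβ]; ring
    rw [hm]
    apply hf
    rw [map_intCast, map_intCast]
    rw [hu, hεχ]
  · intro hl
    have hsp2 : s ^ p = -s := by rw [hsp, hl]; push_cast; ring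
    have hαp : α ^ p = β := by
      rw [hαdef, hβdef, mul_pow, add_pow_char, hfrob A, hsp2, hcp]; ring
    have hβp : β ^ p = α := by
      rw [hαdef, hβdef, mul_pow, sub_pow_char, hfrob A, hsp2, hcp]; ring
    have hX2 : (α ^ (k + 1)) ^ 2 = ((B : ℤ) : K) := by
      rw [← pow_mul, show (k + 1) * 2 = p + 1 by omega, pow_succ, hαp, mul_comm, h2']
    have hY2 : (β ^ (k + 1)) ^ 2 = ((B : ℤ) : K) := by
      rw [← pow_mul, show (k + 1) * 2 = p + 1 by omega, pow_succ, hβp, h2']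
    have hXY : α ^ (k + 1) * β ^ (k + 1) = ((B : ℤ) : K) := by
      rw [← mul_pow, h2', pow_succ, hBk, one_mul]
    have hcl := closed (k + 1)
    rw [hαβ] at hcl
    have h0 : (((lucasU A B (k + 1) : ℤ) : K) * s) ^ 2 = 0 := by
      rw [hcl]
      linear_combination hX2 + hY2 - 2 * hXY
    have h0' : ((lucasU A B (k + 1) : ℤ) : K) = 0 := by
      have h1 := pow_eq_zero_iff (two_ne_zero) |>.mp h0
      rcases mul_eq_zero.mp h1 with h | h
      · exact h
      · exact absurd h hs0
    rw [hm]
    apply hf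
    rw [map_intCast, map_zero]
    exact h0'
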